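/- arXiv:quant-ph/0305100 — 4 statements merged into one kernel-verified Lean document; each statement's English description precedes it below -/
import Mathlib

section
/- For all positive integers n and f with 4·f² < 2ⁿ, the sum of binomial coefficients Σ_{j=0}^{2f} C(2ⁿ, j) is strictly greater than 2^{f·n}. -/
lemma aux_fac_prod (k : ℕ) : ∏ i ∈ Finset.range k, (k - i) = k.factorial := by
  have h1 : ∏ j ∈ Finset.range k, (k - 1 - j + 1) = ∏ j ∈ Finset.range k, (j + 1) :=
    Finset.prod_range_reflect (fun i => i + 1) k
  have h2 : ∏ i ∈ Finset.range k, (k - i) = ∏ j ∈ Finset.range k, (k - 1 - j + 1) := by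
    apply Finset.prod_congr rfl
    intro j hj
    have := Finset.mem_range.mp hj
    omega
  rw [h2, h1, Finset.prod_range_add_one_eq_factorial]

lemma aux_pow_le_descFactorial (N k : ℕ) (hk : k ≤ N) :
    N ^ k * k.factorial ≤ k ^ k * N.descFactorial k := by
  rw [Nat.descFactorial_eq_prod_range, ← aux_fac_prod k]
  have hN : N ^ k = ∏ _i ∈ Finset.range k, N := by
    rw [Finset.prod_const, Finset.card_range]
  have hkk : k ^ k = ∏ _i ∈ Finset.range k, k := by
    rw [Finset.prod_const, Finset.card_range]
  rw [hN, hkk, ← Finset.prod_mul_distrib, ← Finset.prod_mul_distrib]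
  apply Finset.prod_le_prod'
  intro i hi
  have hik := Finset.mem_range.mp hi
  have h3 : k * i ≤ N * i := Nat.mul_le_mul_right i hk
  have h4 : k * i ≤ k * N := Nat.mul_le_mul_left k (le_trans hik.le hk)
  have h5 : N * i ≤ N * k := Nat.mul_le_mul_left N hik.le
  have h6 : N * k = k * N := Nat.mul_comm N k
  rw [Nat.mul_sub, Nat.mul_sub]
  omega

lemma aux_choose (N k : ℕ) (hk : k ≤ N) : N ^ k ≤ k ^ k * N.choose k := by
  have h := aux_pow_le_descFactorial N k hk
  rw [Nat.descFactorial_eq_factorial_mul_choose] at h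
  have hfp : 0 < k.factorial := Nat.factorial_pos k
  calc N ^ k = N ^ k * k.factorial / k.factorial := by
        rw [Nat.mul_div_cancel _ hfp]
    _ ≤ k ^ k * (k.factorial * N.choose k) / k.factorial := Nat.div_le_div_right h
    _ = k ^ k * N.choose k := by
        rw [show k ^ k * (k.factorial * N.choose k) = k ^ k * N.choose k * k.factorial by ring,
          Nat.mul_div_cancel _ hfp]

/-- For all positive integers `n` and `f` with `4·f² < 2ⁿ`, the sum of binomial
coefficients `Σ_{j=0}^{2f} C(2ⁿ, j)` is strictly greater than `2^{f·n}`. -/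
theorem stmt_0 (n f : ℕ) (hn : 0 < n) (hf : 0 < f) (h : 4 * f ^ 2 < 2 ^ n) :
    2 ^ (f * n) < ∑ j ∈ Finset.range (2 * f + 1), Nat.choose (2 ^ n) j := by
  set N := 2 ^ n with hN
  have hk2 : 2 * f ≤ N := by nlinarith
  have hkey := aux_choose N (2 * f) hk2
  -- N ^ (2f) ≤ (2f)^(2f) * C(N, 2f)
  have hNf : 2 ^ (f * n) = N ^ f := by rw [hN, ← pow_mul, mul_comm]
  have hpow : (2 * f) ^ (2 * f) = (4 * f ^ 2) ^ f := by
    rw [show (4 : ℕ) * f ^ 2 = (2 * f) ^ 2 by ring, ← pow_mul, mul_comm]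
  have hlt : (2 * f) ^ (2 * f) * N ^ f < N ^ (2 * f) := by
    rw [hpow, show N ^ (2 * f) = N ^ f * N ^ f by rw [two_mul, pow_add]]
    exact (Nat.mul_lt_mul_right (pow_pos (by positivity) f)).mpr
      (Nat.pow_lt_pow_left h (by omega))
  have hC : N ^ f < N.choose (2 * f) := by
    have hpos : 0 < (2 * f) ^ (2 * f) := by positivity
    by_contra hcon
    push_neg at hcon
    have : (2 * f) ^ (2 * f) * N.choose (2 * f) ≤ (2 * f) ^ (2 * f) * N ^ f :=
      Nat.mul_le_mul_left _ hcon
    omega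
  calc 2 ^ (f * n) = N ^ f := hNf
    _ < N.choose (2 * f) := hC
    _ ≤ ∑ j ∈ Finset.range (2 * f + 1), Nat.choose N j :=
        Finset.single_le_sum (f := fun j => N.choose j) (fun _ _ => Nat.zero_le _)
          (Finset.mem_range.mpr (by omega))
end

section
/- Let n and f be positive integers with 4·f² < 2ⁿ, and let A be any function from binary strings of length f·n to subsets of {0,1}ⁿ. Then there exists a subset L of {0,1}ⁿ of cardinality at most 2f that is not in the range of A. -/
lemma step_ineq (f k N : ℕ) (hk : k < f) (hN : 4*f^2 + 1 ≤ N) :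
    N * ((2*f - (2*k+1)) * (2*f - 2*k)) ≤ (N - (2*k+1)) * (N - 2*k) := by
  have h1 : 2*k+1 ≤ 2*f := by omega
  have h2 : 2*k+1 ≤ N := by nlinarith
  zify [h1, h2, (by omega : 2*k ≤ 2*f), (by omega : 2*k ≤ N)]
  have hf1 : (1:ℤ) ≤ (f:ℤ) := by exact_mod_cast (by omega : 1 ≤ f)
  have hk0 : (0:ℤ) ≤ (k:ℤ) := by positivity
  have hkf : (k:ℤ) ≤ (f:ℤ) - 1 := by omega
  have hN' : (4:ℤ)*(f:ℤ)^2 + 1 ≤ (N:ℤ) := by exact_mod_cast hN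
  set Z := (N:ℤ); set F := (f:ℤ); set K := (k:ℤ)
  -- q(a) = (Z-a)(Z-a-1) - Z(2F-a)(2F-a-1), a = 2K, M = 2F-2
  have hq0 : (0:ℤ) ≤ Z*(Z-1) - Z*(2*F*(2*F-1)) := by nlinarith
  have hqM : (0:ℤ) ≤ (Z-2*F+2)*(Z-2*F+1) - 2*Z := by
    nlinarith [mul_nonneg (by positivity : (0:ℤ) ≤ Z) (by nlinarith [sq_nonneg (2*F-1)] : (0:ℤ) ≤ Z - 4*F + 1)]
  have hid : (2*F-2) * ((Z-2*K)*(Z-2*K-1) - Z*((2*F-2*K)*(2*F-2*K-1)))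
      = (2*F-2-2*K)*(Z*(Z-1) - Z*(2*F*(2*F-1))) + 2*K*((Z-2*F+2)*(Z-2*F+1) - 2*Z)
        + (Z-1)*(2*K)*(2*F-2-2*K)*(2*F-2) := by ring
  have hMa : (0:ℤ) ≤ 2*F-2-2*K := by linarith
  have key : (0:ℤ) ≤ (2*F-2) * ((Z-2*K)*(Z-2*K-1) - Z*((2*F-2*K)*(2*F-2*K-1))) := by
    rw [hid]
    have t1 := mul_nonneg hMa hq0
    have t2 := mul_nonneg (by linarith : (0:ℤ) ≤ 2*K) hqM
    have t3 : (0:ℤ) ≤ (Z-1)*(2*K)*(2*F-2-2*K)*(2*F-2) := by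
      have : (0:ℤ) ≤ Z - 1 := by nlinarith
      have := mul_nonneg (mul_nonneg (mul_nonneg this (by linarith : (0:ℤ) ≤ 2*K)) hMa) (by linarith : (0:ℤ) ≤ 2*F-2)
      linarith
    linarith
  rcases eq_or_lt_of_le hf1 with hf2 | hf2
  · -- f = 1, so k = 0
    have hK : K = 0 := by omega
    rw [hK] at *
    nlinarith
  · have hM : (0:ℤ) < 2*F - 2 := by linarith
    nlinarith [key, hM]

lemma desc_lt (f N : ℕ) (hf : 0 < f) (hN : 4*f^2 + 1 ≤ N) :
    ∀ k, 1 ≤ k → k ≤ f → N^k * (2*f).descFactorial (2*k) < N.descFactorial (2*k) := by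
  intro k
  induction k with
  | zero => omega
  | succ k ih =>
    intro _ hkf
    rcases Nat.eq_or_lt_of_le (by omega : 1 ≤ k + 1) with h1 | h1
    · -- base k+1 = 1
      have hk0 : k = 0 := by omega
      subst hk0
      norm_num
      zify [show (1:ℕ) ≤ 2*f by omega, show (1:ℕ) ≤ N by omega]
      have hf1 : (1:ℤ) ≤ (f:ℤ) := by exact_mod_cast (by omega : 1 ≤ f)
      have hN' : (4:ℤ)*(f:ℤ)^2 + 1 ≤ (N:ℤ) := by exact_mod_cast hN
      nlinarith [mul_pos (by nlinarith [sq_nonneg ((f:ℤ))] : (0:ℤ) < (N:ℤ)) (by linarith : (0:ℤ) < 2*(f:ℤ))]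
    · have hk1 : 1 ≤ k := by omega
      have ihk := ih hk1 (by omega)
      have hstep := step_ineq f k N (by omega) hN
      have e1 : 2*(k+1) = (2*k+1) + 1 := by ring
      rw [e1, Nat.descFactorial_succ, Nat.descFactorial_succ, Nat.descFactorial_succ,
        Nat.descFactorial_succ]
      have hpos : 0 < (N - (2*k+1)) * (N - 2*k) := by
        have : 2*k+1 < N := by nlinarith
        apply Nat.mul_pos <;> omega
      calc N^(k+1) * ((2*f - (2*k+1)) * ((2*f - 2*k) * (2*f).descFactorial (2*k)))
          = (N * ((2*f - (2*k+1)) * (2*f - 2*k))) * (N^k * (2*f).descFactorial (2*k)) := by ring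
        _ ≤ ((N - (2*k+1)) * (N - 2*k)) * (N^k * (2*f).descFactorial (2*k)) :=
            Nat.mul_le_mul_right _ hstep
        _ < ((N - (2*k+1)) * (N - 2*k)) * (N.descFactorial (2*k)) :=
            mul_lt_mul_of_pos_left ihk hpos
        _ = (N - (2*k+1)) * ((N - 2*k) * N.descFactorial (2*k)) := by ring

lemma pow_lt_choose (f N : ℕ) (hf : 0 < f) (hN : 4*f^2 + 1 ≤ N) :
    N^f < N.choose (2*f) := by
  have h := desc_lt f N hf hN f (by omega) (le_refl f)
  rw [Nat.descFactorial_self] at h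
  rw [Nat.descFactorial_eq_factorial_mul_choose] at h
  rw [mul_comm] at h
  exact Nat.lt_of_mul_lt_mul_left h

/-- Let `n` and `f` be positive integers with `4·f² < 2ⁿ`, and let `A` be any function
from binary strings of length `f·n` to subsets of `{0,1}ⁿ`.  Then there exists a subset
`L` of `{0,1}ⁿ` of cardinality at most `2f` that is not in the range of `A`. -/
theorem stmt_1 (n f : ℕ) (hn : 0 < n) (hf : 0 < f) (h : 4 * f ^ 2 < 2 ^ n)
    (A : (Fin (f * n) → Bool) → Finset (Fin n → Bool)) :
    ∃ L : Finset (Fin n → Bool), L.card ≤ 2 * f ∧ ∀ s, A s ≠ L := by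
  classical
  set S : Finset (Finset (Fin n → Bool)) := Finset.univ.powersetCard (2*f) with hS
  set T : Finset (Finset (Fin n → Bool)) := Finset.image A Finset.univ with hT
  have hcardS : S.card = (2^n).choose (2*f) := by
    rw [hS, Finset.card_powersetCard, Finset.card_univ]
    congr 1
    simp [Fintype.card_fun]
  have hcardT : T.card ≤ 2^(f*n) := by
    calc T.card ≤ (Finset.univ : Finset (Fin (f*n) → Bool)).card := Finset.card_image_le
      _ = 2^(f*n) := by rw [Finset.card_univ]; simp [Fintype.card_fun]
  have key : 2^(f*n) < (2^n).choose (2*f) := by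
    have hp := pow_lt_choose f (2^n) hf h
    rwa [← pow_mul, mul_comm n f] at hp
  have hlt : T.card < S.card := by
    rw [hcardS]
    exact lt_of_le_of_lt hcardT key
  have hns : ¬ S ⊆ T := fun hsub => absurd (Finset.card_le_card hsub) (by omega)
  obtain ⟨L, hLS, hLT⟩ := Finset.not_subset.mp hns
  refine ⟨L, ?_, ?_⟩
  · have := (Finset.mem_powersetCard.mp hLS).2
    omega
  · intro s hs
    exact hLT (Finset.mem_image.mpr ⟨s, Finset.mem_univ s, hs⟩)
end

section
/- Let F be a finite field of cardinality q and n a positive integer. For each binary string x ∈ {0,1}ⁿ define the vector φ(x) ∈ ℂ^{F×F} by φ(x)(z,w) = 1/√q if w = p_x(z) and φ(x)(z,w) = 0 otherwise. Then each φ(x) is a unit vector, and for any two distinct binary strings x, y ∈ {0,1}ⁿ, the inner product ⟨φ(x), φ(y)⟩ equals |{z ∈ F : p_x(z) = p_y(z)}|/q, which is at most (n−1)/q. -/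
def fingerprintPoly {F : Type*} [Field F] {n : ℕ} (x : Fin n → Bool) (z : F) : F :=
  ∑ i : Fin n, (if x i then (1 : F) else 0) * z ^ (i : ℕ)

lemma card_agree_le {F : Type*} [Field F] [Fintype F] [DecidableEq F]
    {n : ℕ} (hn : 0 < n) {x y : Fin n → Bool} (hxy : x ≠ y) :
    (Finset.univ.filter fun z : F =>
      fingerprintPoly x z = fingerprintPoly y z).card ≤ n - 1 := by
  set p : Polynomial F := ∑ i : Fin n,
    Polynomial.C ((if x i then (1:F) else 0) - (if y i then 1 else 0)) * Polynomial.X ^ (i:ℕ)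
    with hp
  have heval : ∀ z : F, p.eval z = fingerprintPoly x z - fingerprintPoly y z := by
    intro z
    simp only [hp, Polynomial.eval_finset_sum, Polynomial.eval_mul, Polynomial.eval_C,
      Polynomial.eval_pow, Polynomial.eval_X, sub_mul, Finset.sum_sub_distrib, fingerprintPoly]
  obtain ⟨i, hi⟩ : ∃ i, x i ≠ y i := by
    by_contra h; push_neg at h; exact hxy (funext h)
  have hcoeff : p.coeff i = (if x i then (1:F) else 0) - (if y i then 1 else 0) := by
    rw [hp, Polynomial.finset_sum_coeff]
    rw [Finset.sum_eq_single i]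
    · rw [Polynomial.coeff_C_mul, Polynomial.coeff_X_pow, if_pos rfl, mul_one]
    · intro j _ hj
      rw [Polynomial.coeff_C_mul, Polynomial.coeff_X_pow,
        if_neg (show ¬((i:ℕ) = (j:ℕ)) from fun h => hj (Fin.ext h.symm)), mul_zero]
    · simp
  have hp0 : p ≠ 0 := by
    intro h
    rw [h, Polynomial.coeff_zero] at hcoeff
    cases hx : x i <;> cases hy : y i
    · exact hi (hx.trans hy.symm)
    · rw [hx, hy] at hcoeff; simp at hcoeff
    · rw [hx, hy] at hcoeff; simp at hcoeff
    · exact hi (hx.trans hy.symm)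
  have hdeg : p.natDegree ≤ n - 1 := by
    apply Polynomial.natDegree_sum_le_of_forall_le
    intro j _
    refine le_trans (Polynomial.natDegree_C_mul_le _ _) ?_
    simpa using Nat.le_sub_one_of_lt j.2
  calc (Finset.univ.filter fun z : F =>
      fingerprintPoly x z = fingerprintPoly y z).card
      ≤ p.roots.toFinset.card := by
        apply Finset.card_le_card
        intro z hz
        simp only [Finset.mem_filter] at hz
        exact Multiset.mem_toFinset.2 ((Polynomial.mem_roots hp0).2
          (by rw [Polynomial.IsRoot, heval, sub_eq_zero]; exact hz.2))
    _ ≤ Multiset.card p.roots := p.roots.toFinset_card_le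
    _ ≤ p.natDegree := p.card_roots'
    _ ≤ n - 1 := hdeg

/-- Let `F` be a finite field of cardinality `q` and `n` a positive integer.  For each
binary string `x ∈ {0,1}ⁿ` define the vector `φ(x) ∈ ℂ^{F×F}` by `φ(x)(z,w) = 1/√q`
if `w = p_x(z)` and `φ(x)(z,w) = 0` otherwise.  Then each `φ(x)` is a unit vector,
and for any two distinct binary strings `x, y ∈ {0,1}ⁿ`, the inner product
`⟨φ(x), φ(y)⟩` equals `|{z ∈ F : p_x(z) = p_y(z)}| / q`, which is at most `(n-1)/q`. -/
theorem stmt_3 {F : Type*} [Field F] [Fintype F] [DecidableEq F]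
    (q : ℕ) (hq : Fintype.card F = q) (n : ℕ) (hn : 0 < n)
    (φ : (Fin n → Bool) → F × F → ℂ)
    (hφ : ∀ x zw, φ x zw = if zw.2 = fingerprintPoly x zw.1 then
      (1 / Real.sqrt q : ℝ) else 0) :
    (∀ x : Fin n → Bool, ∑ zw : F × F, ‖φ x zw‖ ^ 2 = 1) ∧
    (∀ x y : Fin n → Bool, x ≠ y →
      ∑ zw : F × F, (starRingEnd ℂ) (φ x zw) * φ y zw
        = (((Finset.univ.filter fun z : F =>
            fingerprintPoly x z = fingerprintPoly y z).card : ℂ) / q) ∧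
      (((Finset.univ.filter fun z : F =>
            fingerprintPoly x z = fingerprintPoly y z).card : ℝ) / q
          ≤ ((n : ℝ) - 1) / q)) := by
  have hq0 : 0 < q := hq ▸ Fintype.card_pos
  have hqR : (0:ℝ) < q := by exact_mod_cast hq0
  have hsq : (1 / Real.sqrt q : ℝ) ^ 2 = 1 / q := by
    rw [div_pow, one_pow, Real.sq_sqrt hqR.le]
  constructor
  · intro x
    have key : ∀ zw : F × F, ‖φ x zw‖ ^ 2 =
        if zw.2 = fingerprintPoly x zw.1 then (1 / q : ℝ) else 0 := by
      intro zw
      rw [hφ]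
      split
      · rw [Complex.norm_real, Real.norm_eq_abs, sq_abs, hsq]
      · simp
    rw [Finset.sum_congr rfl fun zw _ => key zw, Fintype.sum_prod_type]
    simp only [Finset.sum_ite_eq' Finset.univ, Finset.mem_univ, if_true]
    rw [Finset.sum_const, Finset.card_univ, hq, nsmul_eq_mul]
    field_simp
  · intro x y hxy
    have hcard := card_agree_le (F := F) hn hxy
    constructor
    · have key : ∀ zw : F × F, (starRingEnd ℂ) (φ x zw) * φ y zw =
          if zw.2 = fingerprintPoly x zw.1 ∧ zw.2 = fingerprintPoly y zw.1
          then ((1 / q : ℝ) : ℂ) else 0 := by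
        intro zw
        rw [hφ, hφ, apply_ite Complex.ofReal, apply_ite Complex.ofReal]
        simp only [Complex.ofReal_zero]
        by_cases h1 : zw.2 = fingerprintPoly x zw.1
        · by_cases h2 : zw.2 = fingerprintPoly y zw.1
          · rw [if_pos h1, if_pos h2, if_pos ⟨h1, h2⟩, Complex.conj_ofReal,
              ← Complex.ofReal_mul, ← sq, hsq]
          · rw [if_pos h1, if_neg h2, if_neg (fun hc => h2 hc.2), mul_zero]
        · rw [if_neg h1, map_zero, zero_mul, if_neg (fun hc : _ ∧ _ => h1 hc.1)]
      rw [Finset.sum_congr rfl fun zw _ => key zw, Fintype.sum_prod_type]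
      have hinner : ∀ z : F, (∑ w : F,
          if w = fingerprintPoly x z ∧ w = fingerprintPoly y z
          then ((1 / q : ℝ) : ℂ) else 0) =
          if fingerprintPoly x z = fingerprintPoly y z then ((1 / q : ℝ) : ℂ) else 0 := by
        intro z
        by_cases h : fingerprintPoly x z = fingerprintPoly y z
        · rw [if_pos h, Finset.sum_eq_single (fingerprintPoly x z)]
          · simp [h]
          · intro w _ hw; rw [if_neg (fun hc => hw hc.1)]
          · simp
        · rw [if_neg h]
          apply Finset.sum_eq_zero
          intro w _
          rw [if_neg]
          rintro ⟨h1, h2⟩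
          exact h (h1 ▸ h2)
      rw [Finset.sum_congr rfl fun z _ => hinner z, Finset.sum_ite, Finset.sum_const,
        Finset.sum_const]
      simp only [smul_zero, add_zero, nsmul_eq_mul]
      push_cast
      ring
    · have h1 : ((Finset.univ.filter fun z : F =>
          fingerprintPoly x z = fingerprintPoly y z).card : ℝ) ≤ (n : ℝ) - 1 := by
        have h2 := Nat.cast_le (α := ℝ).2 hcard
        rwa [Nat.cast_sub hn, Nat.cast_one] at h2
      gcongr
end

section
/- Let h be any function from the positive integers to {−1, 1} and let θ = 2π·Σ_{n=1}^∞ h(n)·8^{−n}. Then for every positive integer k: if h(k) = 1 then sin²(8^{k−1}·θ + π/4) ≥ 2/3, and if h(k) = −1 then sin²(8^{k−1}·θ + π/4) ≤ 1/3. -/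
private lemma pow8 (n : ℕ) : (8 : ℝ) ^ (-((n : ℤ) + 1)) = (1/8 : ℝ) ^ (n + 1) := by
  rw [one_div, inv_pow, ← zpow_natCast, ← zpow_neg]
  push_cast
  ring_nf


private lemma trig1 {T : ℝ} (hT : |T| ≤ 1 / 56) :
    2 / 3 ≤ Real.sin (2 * Real.pi * T + (1 * (Real.pi / 4) + Real.pi / 4)) ^ 2 := by
  have hπ := Real.pi_pos
  have h2πT : |2 * Real.pi * T| ≤ Real.pi / 7 := by
    rw [abs_mul, abs_of_pos (by positivity)]
    nlinarith [abs_nonneg T]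
  rw [show 2 * Real.pi * T + (1 * (Real.pi / 4) + Real.pi / 4) =
      2 * Real.pi * T + Real.pi / 2 from by ring, Real.sin_add_pi_div_two]
  have hcos : Real.sqrt 3 / 2 ≤ Real.cos (2 * Real.pi * T) := by
    have h5 : Real.cos (Real.pi / 6) ≤ Real.cos |2 * Real.pi * T| :=
      Real.cos_le_cos_of_nonneg_of_le_pi (abs_nonneg _) (by linarith) (by linarith)
    rw [Real.cos_abs, Real.cos_pi_div_six] at h5
    exact h5
  have h3 : (Real.sqrt 3 / 2) ^ 2 = 3 / 4 := by
    rw [div_pow, Real.sq_sqrt (by norm_num : (0:ℝ) ≤ 3)]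
    norm_num
  nlinarith [Real.sqrt_nonneg 3]

private lemma trig2 {T : ℝ} (hT : |T| ≤ 1 / 56) :
    Real.sin (2 * Real.pi * T + (-1 * (Real.pi / 4) + Real.pi / 4)) ^ 2 ≤ 1 / 3 := by
  have hπ := Real.pi_pos
  have h2πT : |2 * Real.pi * T| ≤ Real.pi / 7 := by
    rw [abs_mul, abs_of_pos (by positivity)]
    nlinarith [abs_nonneg T]
  rw [show 2 * Real.pi * T + (-1 * (Real.pi / 4) + Real.pi / 4) =
      2 * Real.pi * T from by ring]
  have h1 : Real.sin (2 * Real.pi * T) ^ 2 ≤ (2 * Real.pi * T) ^ 2 := Real.sin_sq_le_sq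
  have h2 : (2 * Real.pi * T) ^ 2 ≤ (Real.pi / 7) ^ 2 := by
    rw [← sq_abs]
    exact pow_le_pow_left₀ (abs_nonneg _) h2πT 2
  have h4 : Real.pi ≤ 4 := Real.pi_le_four
  nlinarith

set_option maxHeartbeats 1000000 in
/-- Let `h` be any function from the positive integers to `{-1, 1}` and let
`θ = 2π·Σ_{n=1}^∞ h(n)·8^{-n}`.  Then for every positive integer `k`: if `h(k) = 1`
then `sin²(8^{k-1}·θ + π/4) ≥ 2/3`, and if `h(k) = -1` then
`sin²(8^{k-1}·θ + π/4) ≤ 1/3`. -/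
theorem stmt_8 (h : ℕ → ℝ) (hh : ∀ n, 0 < n → h n = 1 ∨ h n = -1)
    (θ : ℝ) (hθ : θ = 2 * Real.pi * ∑' n : ℕ, h (n + 1) * (8 : ℝ) ^ (-((n : ℤ) + 1)))
    (k : ℕ) (hk : 0 < k) :
    (h k = 1 → 2 / 3 ≤ Real.sin ((8 : ℝ) ^ (k - 1) * θ + Real.pi / 4) ^ 2) ∧
    (h k = -1 → Real.sin ((8 : ℝ) ^ (k - 1) * θ + Real.pi / 4) ^ 2 ≤ 1 / 3) := by
  have hπ := Real.pi_pos
  have habs : ∀ n, 0 < n → |h n| = 1 := by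
    intro n hn; rcases hh n hn with e | e <;> simp [e]
  set f : ℕ → ℝ := fun n => h (n + 1) * (8 : ℝ) ^ (-((n : ℤ) + 1)) with hf
  have hfabs : ∀ n, |f n| = (1/8 : ℝ) ^ (n + 1) := by
    intro n
    simp only [hf, abs_mul, habs (n + 1) (by omega), one_mul, pow8]
    rw [abs_of_pos (by positivity)]
  have hsum : Summable f := by
    apply Summable.of_abs
    refine Summable.of_nonneg_of_le (fun n => abs_nonneg _) (fun n => ?_)
      ((summable_geometric_of_lt_one (by norm_num) (by norm_num) :
        Summable fun n : ℕ => (1/8 : ℝ) ^ n).mul_left (1/8))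
    rw [hfabs]; ring_nf; rfl
  -- the rescaled series
  set g : ℕ → ℝ := fun n => h (n + 1) * (8 : ℝ) ^ ((k : ℤ) - (n : ℤ) - 2) with hg
  have hgf : ∀ n, g n = (8 : ℝ) ^ (k - 1) * f n := by
    intro n
    have hp : ((8 : ℝ)) ^ (k - 1) = (8 : ℝ) ^ ((k : ℤ) - 1) := by
      rw [← zpow_natCast]; congr 1; omega
    have hq : (8 : ℝ) ^ ((k : ℤ) - (n : ℤ) - 2) =
        (8 : ℝ) ^ ((k : ℤ) - 1) * (8 : ℝ) ^ (-((n : ℤ) + 1)) := by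
      rw [← zpow_add₀ (by norm_num : (8:ℝ) ≠ 0)]; congr 1; ring
    simp only [hg, hf]
    rw [hq, hp]
    ring
  have hgsum : Summable g := by
    have := hsum.mul_left ((8 : ℝ) ^ (k - 1))
    exact this.congr fun n => (hgf n).symm
  have hsplit : ∑ n ∈ Finset.range (k - 1), g n + ∑' n : ℕ, g (n + (k - 1)) = ∑' n, g n :=
    Summable.sum_add_tsum_nat_add (k - 1) hgsum
  -- tail terms
  have htail : ∀ n : ℕ, g (n + (k - 1)) = h (n + k) * (8 : ℝ) ^ (-(n : ℤ) - 1) := by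
    intro n
    simp only [hg]
    have h1 : n + (k - 1) + 1 = n + k := by omega
    have h2 : (k : ℤ) - ((n + (k - 1) : ℕ) : ℤ) - 2 = -(n : ℤ) - 1 := by omega
    rw [h1, h2]
  have htsum : Summable (fun n : ℕ => g (n + (k - 1))) :=
    (summable_nat_add_iff (k - 1)).2 hgsum
  have hsplit2 : ∑' n : ℕ, g (n + (k - 1)) =
      g (0 + (k - 1)) + ∑' n : ℕ, g (n + 1 + (k - 1)) :=
    Summable.tsum_eq_zero_add htsum
  have hg0 : g (0 + (k - 1)) = h k / 8 := by
    rw [htail]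
    norm_num
    ring_nf
  -- the small tail T
  set T : ℝ := ∑' n : ℕ, g (n + 1 + (k - 1)) with hT
  have hTsum : Summable (fun n : ℕ => g (n + 1 + (k - 1))) :=
    (summable_nat_add_iff 1).2 htsum
  have hTabs : ∀ n : ℕ, |g (n + 1 + (k - 1))| = (1/8 : ℝ) ^ (n + 2) := by
    intro n
    rw [htail (n + 1), abs_mul, habs (n + 1 + k) (by omega), one_mul]
    have he : (8 : ℝ) ^ (-(((n + 1 : ℕ)) : ℤ) - 1) = (1/8 : ℝ) ^ (n + 2) := by
      rw [one_div, inv_pow, ← zpow_natCast, ← zpow_neg]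
      try congr 1
      try push_cast
      try ring
      try omega
    rw [he, abs_of_pos (by positivity)]
  have hTbound : |T| ≤ 1 / 56 := by
    have h1 : |T| ≤ ∑' n : ℕ, |g (n + 1 + (k - 1))| := by
      simpa [Real.norm_eq_abs] using
        norm_tsum_le_tsum_norm (f := fun n : ℕ => g (n + 1 + (k - 1)))
          (by simpa [Real.norm_eq_abs] using hTsum.abs)
    have h2 : ∑' n : ℕ, |g (n + 1 + (k - 1))| = ∑' n : ℕ, (1/64 : ℝ) * (1/8) ^ n := by
      congr 1; funext n; rw [hTabs]; ring
    have h3 : ∑' n : ℕ, (1/64 : ℝ) * (1/8) ^ n = 1 / 56 := by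
      rw [tsum_mul_left, tsum_geometric_of_lt_one (by norm_num) (by norm_num)]
      norm_num
    rw [h2, h3] at h1
    exact h1
  -- the integer part
  obtain ⟨m, hm⟩ : ∃ m : ℤ, (m : ℝ) = ∑ n ∈ Finset.range (k - 1), g n := by
    refine ⟨∑ n ∈ Finset.range (k - 1),
      (if h (n + 1) = 1 then (8:ℤ) ^ (k - 2 - n) else -8 ^ (k - 2 - n)), ?_⟩
    push_cast [apply_ite (fun z : ℤ => (z : ℝ))]
    apply Finset.sum_congr rfl
    intro n hn
    have hn' : n < k - 1 := Finset.mem_range.mp hn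
    have he : ((8 : ℝ)) ^ (k - 2 - n) = (8 : ℝ) ^ ((k : ℤ) - (n : ℤ) - 2) := by
      rw [← zpow_natCast]; congr 1; omega
    simp only [hg]
    rcases hh (n + 1) (by omega) with e | e
    · rw [if_pos e, e, he, one_mul]
    · rw [if_neg (by rw [e]; norm_num), e, he]; ring
  -- main angle identity
  have hangle : (8 : ℝ) ^ (k - 1) * θ + Real.pi / 4 =
      (2 * Real.pi * T + (h k * (Real.pi / 4) + Real.pi / 4)) + (m : ℝ) * (2 * Real.pi) := by
    have h8θ : (8 : ℝ) ^ (k - 1) * θ = 2 * Real.pi * ∑' n, g n := by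
      rw [hθ]
      rw [show (∑' n, g n) = ∑' n, (8 : ℝ) ^ (k - 1) * f n from by
        congr 1; funext n; exact hgf n]
      rw [tsum_mul_left]
      ring
    rw [h8θ, ← hsplit, hsplit2, hg0, ← hm]
    ring
  rw [hangle, Real.sin_add_int_mul_two_pi]
  constructor
  · intro hk1
    rw [hk1]
    exact trig1 hTbound
  · intro hk1
    rw [hk1]
    exact trig2 hTbound
end
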